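/- Suppose (u, E) ∈ H¹_per × ℝ satisfies a_R(u,v) = E ∫₀¹ u v for all v ∈ H¹_per. Then for every k ∈ ℤ the Fourier coefficient û(k) = ∫₀¹ u(x) e^{−2πikx} dx satisfies (4π²k² − E) · û(k) = z1 u(0) + z2 u(R) e^{−2πikR}. -/

import Mathlib

open MeasureTheory intervalIntegral Real

noncomputable section

/-- `v` belongs to `H¹_per` with (weak) derivative `v'`. -/
def IsH1per (v v' : ℝ → ℝ) : Prop :=
  Continuous v ∧ (∀ x, v (x + 1) = v x) ∧ (∀ x, v' (x + 1) = v' x) ∧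
  (∀ a b : ℝ, IntervalIntegrable v' volume a b) ∧
  IntervalIntegrable (fun t => (v' t) ^ 2) volume 0 1 ∧
  (∀ x : ℝ, v x = v 0 + ∫ t in (0:ℝ)..x, v' t)

/-- The bilinear form `a_R`. -/
def aR (z1 z2 R : ℝ) (v v' w w' : ℝ → ℝ) : ℝ :=
  (∫ x in (0:ℝ)..1, v' x * w' x) - z1 * v 0 * w 0 - z2 * v R * w R

/-- Fourier coefficient `ŵ(k) = ∫₀¹ w(x) e^{−2πikx} dx`. -/
def fc (w : ℝ → ℝ) (k : ℤ) : ℂ :=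
  ∫ x in (0:ℝ)..1, (w x : ℂ) * Complex.exp (-(2 * (π:ℂ) * Complex.I * (k:ℂ) * (x:ℂ)))

/-!
Test the variational equation against `cos (2πkx)` and `sin (2πkx)`, the real and imaginary
parts of `e^{-2πikx}` up to sign. Both are smooth, 1-periodic and satisfy `w'' = -(2πk)² w`.
Since `u` is absolutely continuous with derivative `u'` a.e., integrating `∫₀¹ u' w'` by parts
moves the derivative onto `w'` and leaves no boundary term by periodicity, so
`(4π²k² − E) ∫₀¹ u w = z1 u(0) w(0) + z2 u(R) w(R)` for both test functions. Combining the cosine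
and sine identities gives the equation for `û(k)`.
-/

lemma Function.Periodic.deriv {𝕜 F : Type*} [NontriviallyNormedField 𝕜] [NormedAddCommGroup F]
    [NormedSpace 𝕜 F] {f : 𝕜 → F} {c : 𝕜} (hf : Function.Periodic f c) :
    Function.Periodic (deriv f) c := fun x => by
  rw [← deriv_comp_add_const, funext hf]

namespace IsH1per

variable {u u' : ℝ → ℝ}

lemma eq_add_integral (hu : IsH1per u u') (a x : ℝ) : u x = u a + ∫ t in a..x, u' t := by
  obtain ⟨-, -, -, hint, -, hrep⟩ := hu
  rw [hrep x, hrep a, ← integral_add_adjacent_intervals (hint 0 a) (hint a x)]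
  ring

lemma absolutelyContinuousOnInterval (hu : IsH1per u u') (a b : ℝ) :
    AbsolutelyContinuousOnInterval u a b := by
  have hF := (hu.2.2.2.1 a b).absolutelyContinuousOnInterval_intervalIntegral Set.left_mem_uIcc
  refine hF.congr fun E => Finset.sum_congr rfl fun i _ => ?_
  rw [hu.eq_add_integral a (E.2 i).1, hu.eq_add_integral a (E.2 i).2, dist_add_left]

lemma ae_hasDerivAt (hu : IsH1per u u') (a b : ℝ) :
    ∀ᵐ x, x ∈ Set.uIcc a b → HasDerivAt u (u' x) x := by
  filter_upwards [(hu.2.2.2.1 a b).ae_hasDerivAt_integral] with x hx hxab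
  exact ((hx hxab a Set.left_mem_uIcc).const_add (u a)).congr_of_eventuallyEq
    (Filter.Eventually.of_forall (hu.eq_add_integral a))

theorem integral_deriv_mul_eq_sub (hu : IsH1per u u') {w : ℝ → ℝ} {a b : ℝ}
    (hw : AbsolutelyContinuousOnInterval w a b) :
    ∫ x in a..b, u' x * w x = u b * w b - u a * w a - ∫ x in a..b, u x * deriv w x := by
  rw [(hu.absolutelyContinuousOnInterval a b).integral_mul_deriv_eq_deriv_mul hw, sub_sub_cancel]
  refine integral_congr_ae ?_
  filter_upwards [hu.ae_hasDerivAt a b] with x hx hxab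
  rw [(hx (Set.uIoc_subset_uIcc hxab)).deriv]

theorem integral_deriv_mul_eq_neg (hu : IsH1per u u') {w : ℝ → ℝ}
    (hw : AbsolutelyContinuousOnInterval w 0 1) (hw1 : w 1 = w 0) :
    ∫ x in (0:ℝ)..1, u' x * w x = -∫ x in (0:ℝ)..1, u x * deriv w x := by
  rw [hu.integral_deriv_mul_eq_sub hw, hw1, show u 1 = u 0 by simpa using hu.2.1 0]
  ring

lemma of_hasDerivAt {w w' : ℝ → ℝ} (hw : ∀ x, HasDerivAt w (w' x) x) (hw' : Continuous w')
    (hper : Function.Periodic w 1) : IsH1per w w' := by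
  have hderiv : deriv w = w' := funext fun x => (hw x).deriv
  refine ⟨continuous_iff_continuousAt.2 fun x => (hw x).continuousAt, hper,
    hderiv ▸ hper.deriv, hw'.intervalIntegrable, (hw'.pow 2).intervalIntegrable 0 1,
    fun x => ?_⟩
  rw [integral_eq_sub_of_hasDerivAt (fun t _ => hw t) (hw'.intervalIntegrable 0 x)]
  ring

theorem sq_sub_mul_integral_mul_eq {z1 z2 R E : ℝ} (hu : IsH1per u u')
    (huE : ∀ v v' : ℝ → ℝ, IsH1per v v' →
      aR z1 z2 R u u' v v' = E * ∫ x in (0:ℝ)..1, u x * v x)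
    {ω : ℝ} {w w' : ℝ → ℝ} (hw : ∀ x, HasDerivAt w (w' x) x)
    (hw' : ∀ x, HasDerivAt w' (-(ω ^ 2 * w x)) x) (hper : Function.Periodic w 1) :
    (ω ^ 2 - E) * ∫ x in (0:ℝ)..1, u x * w x = z1 * u 0 * w 0 + z2 * u R * w R := by
  have hwcont : Continuous w := continuous_iff_continuousAt.2 fun x => (hw x).continuousAt
  have hderiv' : deriv w' = fun x => -(ω ^ 2 * w x) := funext fun x => (hw' x).deriv
  have hw'C1 : ContDiff ℝ 1 w' := contDiff_one_iff_deriv.2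
    ⟨fun x => (hw' x).differentiableAt, hderiv' ▸ (continuous_const.mul hwcont).neg⟩
  have hw'per : Function.Periodic w' 1 := funext (fun x => (hw x).deriv) ▸ hper.deriv
  have hparts : ∫ x in (0:ℝ)..1, u' x * w' x = ω ^ 2 * ∫ x in (0:ℝ)..1, u x * w x := by
    rw [hu.integral_deriv_mul_eq_neg hw'C1.contDiffOn.absolutelyContinuousOnInterval
      (by simpa using hw'per 0), hderiv', ← intervalIntegral.integral_neg,
      ← intervalIntegral.integral_const_mul]
    congr 1 with x
    ring
  have hvar := huE w w' (of_hasDerivAt hw hw'C1.continuous hper)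
  rw [aR, hparts] at hvar
  linarith

end IsH1per

lemma cexp_neg_two_pi_I_int_mul (k : ℤ) (x : ℝ) :
    Complex.exp (-(2 * (π:ℂ) * Complex.I * (k:ℂ) * (x:ℂ))) =
      (cos (2 * π * k * x) : ℂ) - (sin (2 * π * k * x) : ℂ) * Complex.I := by
  rw [show -(2 * (π:ℂ) * Complex.I * (k:ℂ) * (x:ℂ)) = (-(2 * π * k * x) : ℝ) * Complex.I by
    push_cast; ring, Complex.exp_mul_I, Complex.ofReal_neg, Complex.cos_neg, Complex.sin_neg,
    ← Complex.ofReal_cos, ← Complex.ofReal_sin]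
  ring

lemma fc_eq_integral_cos_sub_integral_sin {w : ℝ → ℝ} (hw : Continuous w) (k : ℤ) :
    fc w k = ((∫ x in (0:ℝ)..1, w x * cos (2 * π * k * x) : ℝ) : ℂ) -
      ((∫ x in (0:ℝ)..1, w x * sin (2 * π * k * x) : ℝ) : ℂ) * Complex.I := by
  rw [fc, ← intervalIntegral.integral_ofReal, ← intervalIntegral.integral_ofReal,
    ← intervalIntegral.integral_mul_const, ← intervalIntegral.integral_sub
      (Continuous.intervalIntegrable (by fun_prop) _ _)
      (Continuous.intervalIntegrable (by fun_prop) _ _)]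
  congr 1 with x
  rw [cexp_neg_two_pi_I_int_mul]
  push_cast
  ring

theorem fourier_coefficient_equation_general (z1 z2 R : ℝ) (u u' : ℝ → ℝ) (E : ℝ) (hu : IsH1per u u')
    (huE : ∀ v v' : ℝ → ℝ, IsH1per v v' →
      aR z1 z2 R u u' v v' = E * ∫ x in (0:ℝ)..1, u x * v x) :
    ∀ k : ℤ, (4 * (π:ℂ) ^ 2 * (k:ℂ) ^ 2 - (E:ℂ)) * fc u k =
      (z1:ℂ) * (u 0 : ℂ) + (z2:ℂ) * (u R : ℂ) * Complex.exp (-(2 * (π:ℂ) * Complex.I * (k:ℂ) * (R:ℂ))) := by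
  intro k
  set ω : ℝ := 2 * π * k
  have hlin (x : ℝ) : HasDerivAt (fun y => ω * y) ω x := by
    simpa using (hasDerivAt_id x).const_mul ω
  have hshift (x : ℝ) : ω * (x + 1) = ω * x + k * (2 * π) := by ring
  have hcos := hu.sq_sub_mul_integral_mul_eq huE (ω := ω) (w := fun x => cos (ω * x))
    (w' := fun x => -(ω * sin (ω * x)))
    (fun x => (hlin x).cos.congr_deriv (by ring))
    (fun x => ((hlin x).sin.const_mul ω).fun_neg.congr_deriv (by ring))
    (fun x => by simp only [hshift, cos_add_int_mul_two_pi])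
  have hsin := hu.sq_sub_mul_integral_mul_eq huE (ω := ω) (w := fun x => sin (ω * x))
    (w' := fun x => ω * cos (ω * x))
    (fun x => (hlin x).sin.congr_deriv (by ring))
    (fun x => ((hlin x).cos.const_mul ω).congr_deriv (by ring))
    (fun x => by simp only [hshift, sin_add_int_mul_two_pi])
  simp only [mul_zero, cos_zero, sin_zero, mul_one] at hcos hsin
  rw [fc_eq_integral_cos_sub_integral_sin hu.1, cexp_neg_two_pi_I_int_mul]
  have hcosC := congrArg Complex.ofReal hcos
  have hsinC := congrArg Complex.ofReal hsin
  simp only [ω] at hcosC hsinC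
  push_cast at hcosC hsinC ⊢
  linear_combination hcosC - Complex.I * hsinC

/-- If `(u,E) ∈ H¹_per × ℝ` satisfies `a_R(u,v) = E ∫₀¹ u v` for all `v ∈ H¹_per`, then
for every `k ∈ ℤ`, `(4π²k² − E)·û(k) = z1 u(0) + z2 u(R) e^{−2πikR}` (eq. (cka2)). -/
theorem fourier_coefficient_equation (z1 z2 R : ℝ) (hz1 : 0 < z1) (hz2 : 0 < z2)
    (hR : R ∈ Set.Ioo (0 : ℝ) 1) (u u' : ℝ → ℝ) (E : ℝ) (hu : IsH1per u u')
    (huE : ∀ v v' : ℝ → ℝ, IsH1per v v' →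
      aR z1 z2 R u u' v v' = E * ∫ x in (0:ℝ)..1, u x * v x) :
    ∀ k : ℤ, (4 * (π:ℂ) ^ 2 * (k:ℂ) ^ 2 - (E:ℂ)) * fc u k =
      (z1:ℂ) * (u 0 : ℂ) + (z2:ℂ) * (u R : ℂ) * Complex.exp (-(2 * (π:ℂ) * Complex.I * (k:ℂ) * (R:ℂ))) :=
  fourier_coefficient_equation_general z1 z2 R u u' E hu huE

end
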